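/- Let V = C v_0 \oplus C v_1 and fix B_0, B^1_{00}, B^1_{01}, B^1_{10}, B^1_{11}, \kappa_0 \in C with B^1_{00} = B^1_{11}. Define an action of the Borel subalgebra b_3 of the three-point Heisenberg algebra on V by: h_3^+ acts as 0, b_0 v_i = B_0 v_i, b^1_0 v_0 = B^1_{00} v_0 + B^1_{01} v_1, b^1_0 v_1 = B^1_{10} v_0 + B^1_{11} v_1, 1_0 v_i = \kappa_0 v_i, and 1_1 v_i = 0. Then this defines a representation of b_3 on V. -/

import Mathlib

/-- Basis index for the three-point Heisenberg algebra: `Sum.inl (false, m) ↔ b_m`,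
`Sum.inl (true, m) ↔ b¹_m`, `Sum.inr false ↔ 1₀`, `Sum.inr true ↔ 1₁`. -/
abbrev HeisIdx : Type := (Bool × ℤ) ⊕ Bool

/-- The underlying space of the three-point Heisenberg algebra. -/
abbrev HeisV : Type := HeisIdx →₀ ℂ

noncomputable def eH (p : HeisIdx) : HeisV := Finsupp.single p 1

/-- The odd double factorial `j‼` extended to negative odd integers by the
convention `(-2k-1)‼ = (-1)ᵏ/(2k-1)‼`. -/
noncomputable def oddDF (j : ℤ) : ℂ :=
  if -1 ≤ j then (Nat.doubleFactorial j.toNat : ℂ)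
  else (-1) ^ ((-j - 1) / 2).toNat / (Nat.doubleFactorial (-j - 2).toNat : ℂ)

/-- `1/j!`, extended by `0` for negative `j`. -/
noncomputable def invFact (j : ℤ) : ℂ :=
  if 0 ≤ j then ((j.toNat).factorial : ℂ)⁻¹ else 0

/-- `μ_{m,n} = m(-1)^{m+n+1} 2^{m+n} (2(m+n)-1)‼/(m+n+1)!`. -/
noncomputable def muH (m n : ℤ) : ℂ :=
  (m : ℂ) * (-1 : ℂ) ^ (m + n + 1) * (2 : ℂ) ^ (m + n) *
    oddDF (2 * (m + n) - 1) * invFact (m + n + 1)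

/-- The three-point Heisenberg bracket on basis elements. -/
noncomputable def brHBasis : HeisIdx → HeisIdx → HeisV
  | Sum.inl (false, m), Sum.inl (false, n) =>
      (if m + n = 0 then (-2 * (m : ℂ)) else 0) • eH (Sum.inr false)
  | Sum.inl (true, m), Sum.inl (true, n) =>
      (((n : ℂ) - m) *
        ((if m + n = -2 then 1 else 0) + (if m + n = -1 then 4 else 0))) •
          eH (Sum.inr false)
  | Sum.inl (true, m), Sum.inl (false, n) => (2 * muH m n) • eH (Sum.inr true)
  | Sum.inl (false, n), Sum.inl (true, m) => (-(2 * muH m n)) • eH (Sum.inr true)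
  | _, _ => 0

/-- The three-point Heisenberg bracket, extended bilinearly. -/
noncomputable def brH : HeisV →ₗ[ℂ] HeisV →ₗ[ℂ] HeisV :=
  Finsupp.lift (HeisV →ₗ[ℂ] HeisV) ℂ HeisIdx fun p =>
    Finsupp.lift HeisV ℂ HeisIdx fun q => brHBasis p q


/-- The Borel subspace `b₃ = h₃⁺ ⊕ h₃⁰`: the span of `b_n, b¹_n` for `n ≥ 0`
together with `1₀, 1₁`. -/
noncomputable def borelH : Submodule ℂ HeisV :=
  Submodule.span ℂ
    ((Set.range fun n : ℕ => eH (Sum.inl (false, (n : ℤ)))) ∪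
      (Set.range fun n : ℕ => eH (Sum.inl (true, (n : ℤ)))) ∪
        {eH (Sum.inr false), eH (Sum.inr true)})


/-- The action of the basis elements of the Heisenberg algebra on `V = ℂv₀ ⊕ ℂv₁`
(as 2×2 matrices): `h₃⁺` acts by `0`, `b₀` by `B₀`, `b¹₀` by the matrix with
`b¹₀v₀ = B₀₀v₀ + B₀₁v₁`, `b¹₀v₁ = B₁₀v₀ + B₁₁v₁`, `1₀` by `κ₀` and `1₁` by `0`. -/
noncomputable def rhoVBasis (B0 B00 B01 B10 B11 κ0 : ℂ) :
    HeisIdx → Matrix (Fin 2) (Fin 2) ℂ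
  | Sum.inl (false, m) => if m = 0 then B0 • 1 else 0
  | Sum.inl (true, m) => if m = 0 then !![B00, B10; B01, B11] else 0
  | Sum.inr false => κ0 • 1
  | Sum.inr true => 0

noncomputable def rhoV (B0 B00 B01 B10 B11 κ0 : ℂ) :
    HeisV →ₗ[ℂ] Matrix (Fin 2) (Fin 2) ℂ :=
  Finsupp.lift (Matrix (Fin 2) (Fin 2) ℂ) ℂ HeisIdx (rhoVBasis B0 B00 B01 B10 B11 κ0)

/-!
Every basis vector of `b₃` acts by an element of the commutative algebra `ℂ[b¹₀]` generated by
the action of `b¹₀` (the others act by scalars), so the actions of any two of them commute.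
On the other side, the bracket of two basis vectors of `b₃` is a multiple of `1₁`, which acts
by `0`: `[b_m, b_n] = -2m δ_{m+n,0} 1₀` vanishes for `m, n ≥ 0`, and `[b¹_m, b¹_n]` is nonzero
only for `m + n ∈ {-1, -2}`. Bilinearity extends the identity to all of `b₃`.
-/

theorem LinearMap.eqOn_span₂ {R M N P : Type*} [CommSemiring R] [AddCommMonoid M]
    [AddCommMonoid N] [AddCommMonoid P] [Module R M] [Module R N] [Module R P]
    {f g : M →ₗ[R] N →ₗ[R] P} {s : Set M} {t : Set N} (h : ∀ x ∈ s, ∀ y ∈ t, f x y = g x y)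
    {x : M} (hx : x ∈ Submodule.span R s) {y : N} (hy : y ∈ Submodule.span R t) :
    f x y = g x y :=
  LinearMap.eqOn_span (f := f.flip y) (g := g.flip y)
    (fun _ hx' => LinearMap.eqOn_span (fun _ hy' => h _ hx' _ hy') hy) hx

theorem LinearMap.map_bracket_eq_commutator_of_mem_span {R M A : Type*} [CommRing R]
    [AddCommGroup M] [Module R M] [Ring A] [Algebra R A] (β : M →ₗ[R] M →ₗ[R] M)
    (ρ : M →ₗ[R] A) {s : Set M} (hs : ∀ x ∈ s, ∀ y ∈ s, ρ (β x y) = ρ x * ρ y - ρ y * ρ x) :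
    ∀ x ∈ Submodule.span R s, ∀ y ∈ Submodule.span R s,
      ρ (β x y) = ρ x * ρ y - ρ y * ρ x := by
  let μ := (LinearMap.mul R A).compl₁₂ ρ ρ
  intro x hx y hy
  simpa [μ] using LinearMap.eqOn_span₂ (f := β.compr₂ ρ) (g := μ - μ.flip)
    (by simpa [μ] using hs) hx hy

def IsBorelIdx : HeisIdx → Prop
  | Sum.inl (_, m) => 0 ≤ m
  | Sum.inr _ => True

theorem borelH_eq_span_image : borelH = Submodule.span ℂ (eH '' {p | IsBorelIdx p}) := by
  rw [borelH]
  congr 1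
  ext x
  constructor
  · rintro ((⟨m, rfl⟩ | ⟨m, rfl⟩) | rfl | rfl)
    exacts [⟨_, Int.natCast_nonneg m, rfl⟩, ⟨_, Int.natCast_nonneg m, rfl⟩,
      ⟨Sum.inr false, trivial, rfl⟩, ⟨Sum.inr true, trivial, rfl⟩]
  · rintro ⟨⟨_ | _, m⟩ | _ | _, hp, rfl⟩
    · lift m to ℕ using hp
      exact Or.inl (Or.inl ⟨m, rfl⟩)
    · lift m to ℕ using hp
      exact Or.inl (Or.inr ⟨m, rfl⟩)
    · exact Or.inr (Or.inl rfl)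
    · exact Or.inr (Or.inr rfl)

theorem brH_eH (p q : HeisIdx) : brH (eH p) (eH q) = brHBasis p q := by
  simp [brH, eH, Finsupp.lift_apply, Finsupp.sum_single_index]

theorem brHBasis_eq_smul_of_isBorelIdx {p q : HeisIdx} (hp : IsBorelIdx p) (hq : IsBorelIdx q) :
    ∃ c : ℂ, brHBasis p q = c • eH (Sum.inr true) := by
  rcases p with ⟨_ | _, m⟩ | _ <;> rcases q with ⟨_ | _, n⟩ | _ <;>
    simp only [IsBorelIdx] at hp hq
  case inl.false.inl.false =>
    refine ⟨0, ?_⟩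
    rw [brHBasis, zero_smul]
    split_ifs with hmn
    · simp [show m = 0 by omega]
    · exact zero_smul _ _
  case inl.true.inl.true =>
    refine ⟨0, ?_⟩
    rw [brHBasis, if_neg (by omega), if_neg (by omega)]
    simp
  case inl.false.inl.true | inl.true.inl.false => exact ⟨_, rfl⟩
  all_goals exact ⟨0, by simp [brHBasis]⟩

section Action

variable (B0 B00 B01 B10 B11 κ0 : ℂ)

theorem rhoV_eH (p : HeisIdx) :
    rhoV B0 B00 B01 B10 B11 κ0 (eH p) = rhoVBasis B0 B00 B01 B10 B11 κ0 p := by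
  simp [rhoV, eH, Finsupp.lift_apply, Finsupp.sum_single_index]

theorem rhoVBasis_mem_adjoin (p : HeisIdx) :
    rhoVBasis B0 B00 B01 B10 B11 κ0 p ∈ Algebra.adjoin ℂ {!![B00, B10; B01, B11]} := by
  rcases p with ⟨_ | _, m⟩ | _ | _ <;> simp only [rhoVBasis]
  · split_ifs
    exacts [Subalgebra.smul_mem _ (one_mem _) _, zero_mem _]
  · split_ifs
    exacts [Algebra.self_mem_adjoin_singleton ℂ _, zero_mem _]
  · exact Subalgebra.smul_mem _ (one_mem _) _
  · exact zero_mem _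

theorem commute_rhoVBasis (p q : HeisIdx) :
    Commute (rhoVBasis B0 B00 B01 B10 B11 κ0 p) (rhoVBasis B0 B00 B01 B10 B11 κ0 q) :=
  Algebra.commute_of_mem_adjoin_singleton_of_commute (rhoVBasis_mem_adjoin _ _ _ _ _ _ q)
    (Algebra.commute_of_mem_adjoin_self (rhoVBasis_mem_adjoin _ _ _ _ _ _ p)).symm

end Action

theorem borel_two_dim_rep_general (B0 B00 B01 B10 B11 κ0 : ℂ) :
    ∀ x ∈ borelH, ∀ y ∈ borelH,
      rhoV B0 B00 B01 B10 B11 κ0 (brH x y) =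
        rhoV B0 B00 B01 B10 B11 κ0 x * rhoV B0 B00 B01 B10 B11 κ0 y -
          rhoV B0 B00 B01 B10 B11 κ0 y * rhoV B0 B00 B01 B10 B11 κ0 x := by
  rw [borelH_eq_span_image]
  refine LinearMap.map_bracket_eq_commutator_of_mem_span _ _ ?_
  rintro _ ⟨p, hp, rfl⟩ _ ⟨q, hq, rfl⟩
  obtain ⟨c, hc⟩ := brHBasis_eq_smul_of_isBorelIdx hp hq
  rw [brH_eH, hc, map_smul, rhoV_eH, rhoV_eH, rhoV_eH, (commute_rhoVBasis _ _ _ _ _ _ p q).eq]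
  simp [rhoVBasis]

/-- with `B₀₀ = B₁₁`, the above assignment defines a representation
of the Borel subalgebra `b₃` on `V = ℂ²`. -/
theorem borel_two_dim_rep (B0 B00 B01 B10 B11 κ0 : ℂ) (h : B00 = B11) :
    ∀ x ∈ borelH, ∀ y ∈ borelH,
      rhoV B0 B00 B01 B10 B11 κ0 (brH x y) =
        rhoV B0 B00 B01 B10 B11 κ0 x * rhoV B0 B00 B01 B10 B11 κ0 y -
          rhoV B0 B00 B01 B10 B11 κ0 y * rhoV B0 B00 B01 B10 B11 κ0 x :=
  borel_two_dim_rep_general B0 B00 B01 B10 B11 κ0
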